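/- arXiv:1711.00731 — 2 statements merged into one kernel-verified Lean document; each statement's English description precedes it below -/
import Mathlib

section
/- Let ω ⊂ ℝ² be a bounded domain and θ : closure(ω) → ℝ³ an injective C² mapping such that a_α := ∂_α θ are linearly independent at all points of closure(ω); let a₃ := (a₁ × a₂)/|a₁ × a₂|, Θ(y, x₃) := θ(y) + x₃ a₃(y), and let ε₀ > 0 be such that Θ is a C¹-diffeomorphism with det(∂₁Θ, ∂₂Θ, ∂₃Θ) > 0 on closure(ω) × [−ε₀, ε₀]. Let Ω := ω × (−1,1); for 0 < ε ≤ ε₀ and x = (y, x₃) ∈ closure(Ω) define g(ε)(x) := det( g_{ij}(y, εx₃) ), where g_{ij} := ∂_i Θ · ∂_j Θ, and let a(y) := det(a_{αβ}(y)) with a_{αβ} := a_α · a_β. Then: (i) there exists a₀ > 0 with a(y) ≥ a₀ for all y ∈ closure(ω); (ii) there exists C > 0 such that |g(ε)(x) − a(y)| ≤ Cε for all x = (y,x₃) ∈ closure(Ω) and all 0 < ε ≤ ε₀; (iii) there exist constants g₀, g₁ > 0 such that g₀ ≤ g(ε)(x) ≤ g₁ for all x ∈ closure(Ω) and all ε with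 0 < ε ≤ ε₀. -/
/-!
Write `g_i = ∂_i Θ` for the covariant basis of the shell. Since `Θ(y, t) = θ(y) + t a₃(y)`, we
have `g_α = a_α + t ∂_α a₃` and `g₃ = a₃`, so the matrix with rows `g_i(y, t)` is `B(y) + t D(y)`
with `B`, `D` continuous on the compact set `closure ω`. The Gram determinant `det (g_i · g_j)` is
`det (B + t D)²`; at `t = 0` it is the squared volume of `(a₁, a₂, a₃)`, which by Lagrange's
identity is `|a₁ × a₂|² = a`. Since `det²` is `C¹`, it is Lipschitz on the compact range of
`B + t D`, whence `|g(ε) - a| ≤ C ε`; the bounds `g₀`, `g₁` are the extrema of the positive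
continuous function `det (B + t D)²` on `closure ω × [-ε₀, ε₀]`.
-/

open Set Matrix

theorem Matrix.det_of_sum_mul_eq_sq {n R : Type*} [Fintype n] [DecidableEq n] [CommRing R]
    (w : n → n → R) : (of fun i j => ∑ m, w i m * w j m).det = (of w).det ^ 2 := by
  have hgram : of (fun i j => ∑ m, w i m * w j m) = of w * (of w)ᵀ := by
    ext i j
    simp [Matrix.mul_apply]
  rw [hgram, det_mul, det_transpose, sq]

theorem contDiff_det_of {n : Type*} [Fintype n] [DecidableEq n] {k : WithTop ℕ∞} :
    ContDiff ℝ k fun M : n → n → ℝ => (of M).det := by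
  simp only [det_apply, of_apply]
  fun_prop

theorem sum_sq_eq_dotProduct_self {ι : Type*} [Fintype ι] (v : ι → ℝ) :
    ∑ i, v i ^ 2 = v ⬝ᵥ v := by
  simp only [dotProduct, sq]

theorem sum_sq_pos_of_ne_zero {ι : Type*} [Fintype ι] {v : ι → ℝ} (h : v ≠ 0) :
    0 < ∑ i, v i ^ 2 := by
  obtain ⟨i, hi⟩ := Function.ne_iff.1 h
  exact Finset.sum_pos' (fun j _ => sq_nonneg _) ⟨i, Finset.mem_univ _, even_two.pow_pos hi⟩

theorem det_smul_cross_sq (u v : Fin 3 → ℝ) :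
    det ![u, v, (√((u ⨯₃ v) ⬝ᵥ (u ⨯₃ v)))⁻¹ • u ⨯₃ v] ^ 2 = (u ⨯₃ v) ⬝ᵥ (u ⨯₃ v) := by
  have hdet (r : ℝ) : det ![u, v, r • u ⨯₃ v] = r * ((u ⨯₃ v) ⬝ᵥ (u ⨯₃ v)) := by
    rw [← triple_product_eq_det, map_smul, dotProduct_smul, triple_product_permutation,
      triple_product_permutation, smul_eq_mul]
  rw [hdet, ← div_eq_inv_mul, Real.div_sqrt,
    Real.sq_sqrt (by simpa using dotProduct_self_star_nonneg (u ⨯₃ v))]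

theorem det_gram_fin_two_eq_det_sq (w : Fin 2 → Fin 3 → ℝ) :
    (of fun α β => ∑ m, w α m * w β m).det =
      det ![w 0, w 1, (√(∑ i, (w 0 ⨯₃ w 1) i ^ 2))⁻¹ • w 0 ⨯₃ w 1] ^ 2 := by
  rw [sum_sq_eq_dotProduct_self, det_smul_cross_sq, cross_dot_cross, det_fin_two]
  rfl

theorem IsCompact.exists_pos_bounds {X : Type*} [TopologicalSpace X] {s : Set X}
    (hs : IsCompact s) {φ : X → ℝ} (hφ : ContinuousOn φ s) (hpos : ∀ x ∈ s, 0 < φ x) :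
    ∃ m > 0, ∃ M > 0, ∀ x ∈ s, m ≤ φ x ∧ φ x ≤ M := by
  rcases s.eq_empty_or_nonempty with rfl | hne
  · exact ⟨1, one_pos, 1, one_pos, by simp⟩
  obtain ⟨x₀, hx₀, hmin⟩ := hs.exists_isMinOn hne hφ
  obtain ⟨x₁, hx₁, hmax⟩ := hs.exists_isMaxOn hne hφ
  exact ⟨φ x₀, hpos x₀ hx₀, φ x₁, hpos x₁ hx₁, fun x hx => ⟨hmin hx, hmax hx⟩⟩

theorem ContinuousOn.add_smul_prod {X E : Type*} [TopologicalSpace X] [NormedAddCommGroup E]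
    [NormedSpace ℝ E] {K : Set X} {B D : X → E} (hB : ContinuousOn B K) (hD : ContinuousOn D K)
    (T : Set ℝ) : ContinuousOn (fun p : X × ℝ => B p.1 + p.2 • D p.1) (K ×ˢ T) :=
  (hB.comp continuousOn_fst fun _ hp => hp.1).add
    (continuousOn_snd.smul (hD.comp continuousOn_fst fun _ hp => hp.1))

theorem ContDiff.exists_norm_sub_add_smul_le {X E F : Type*} [TopologicalSpace X]
    [NormedAddCommGroup E] [NormedSpace ℝ E] [NormedAddCommGroup F] [NormedSpace ℝ F]
    {f : E → F} (hf : ContDiff ℝ 1 f)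
    {K : Set X} (hK : IsCompact K) {B D : X → E} (hB : ContinuousOn B K)
    (hD : ContinuousOn D K) (r : ℝ) :
    ∃ C, ∀ y ∈ K, ∀ t, |t| ≤ r → ‖f (B y + t • D y) - f (B y)‖ ≤ C * |t| := by
  set S := (fun p : X × ℝ => B p.1 + p.2 • D p.1) '' (K ×ˢ Icc (-r) r)
  have hS : IsCompact S := (hK.prod isCompact_Icc).image_of_continuousOn (hB.add_smul_prod hD _)
  obtain ⟨L, hL⟩ := hf.locallyLipschitz.locallyLipschitzOn.exists_lipschitzOnWith_of_compact hS
  obtain ⟨R, hR⟩ := hK.exists_bound_of_continuousOn hD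
  refine ⟨L * R, fun y hy t ht => ?_⟩
  have hmem (s : ℝ) (hs : |s| ≤ r) : B y + s • D y ∈ S := ⟨(y, s), ⟨hy, abs_le.1 hs⟩, rfl⟩
  calc ‖f (B y + t • D y) - f (B y)‖
      ≤ L * ‖B y + t • D y - B y‖ := by
        simpa using hL.norm_sub_le (hmem t ht) (hmem 0 (by simpa using (abs_nonneg t).trans ht))
    _ ≤ L * R * |t| := by
        rw [add_sub_cancel_left, norm_smul, Real.norm_eq_abs, mul_assoc, mul_comm |t|]
        gcongr
        exact hR y hy

theorem exists_bounds_of_eq_add_smul {X E : Type*} [TopologicalSpace X] [NormedAddCommGroup E]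
    [NormedSpace ℝ E] {f : E → ℝ} (hf : ContDiff ℝ 1 f) {K : Set X}
    (hK : IsCompact K) {B D : X → E} (hB : ContinuousOn B K) (hD : ContinuousOn D K) {ε₀ : ℝ}
    (hε₀ : 0 ≤ ε₀) (hpos : ∀ p ∈ K ×ˢ Icc (-ε₀) ε₀, 0 < f (B p.1 + p.2 • D p.1))
    {g : ℝ → X × ℝ → ℝ} {A : X → ℝ}
    (hg : ∀ ε, ∀ p ∈ K ×ˢ Icc (-1 : ℝ) 1, g ε p = f (B p.1 + (ε * p.2) • D p.1))
    (hA : ∀ y ∈ K, A y = f (B y)) :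
    (∃ a₀ > (0 : ℝ), ∀ y ∈ K, a₀ ≤ A y) ∧
    (∃ C > (0 : ℝ), ∀ ε : ℝ, 0 < ε → ε ≤ ε₀ →
      ∀ p ∈ K ×ˢ Icc (-1 : ℝ) 1, |g ε p - A p.1| ≤ C * ε) ∧
    (∃ g₀ > (0 : ℝ), ∃ g₁ > (0 : ℝ), ∀ ε : ℝ, 0 < ε → ε ≤ ε₀ →
      ∀ p ∈ K ×ˢ Icc (-1 : ℝ) 1, g₀ ≤ g ε p ∧ g ε p ≤ g₁) := by
  obtain ⟨g₀, hg₀, g₁, hg₁, hbd⟩ := (hK.prod isCompact_Icc).exists_pos_bounds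
    (hf.continuous.comp_continuousOn (hB.add_smul_prod hD _)) hpos
  obtain ⟨C, hC⟩ := hf.exists_norm_sub_add_smul_le hK hB hD ε₀
  have hscaled {ε : ℝ} (hε : 0 < ε) {x : ℝ} (hx : x ∈ Icc (-1 : ℝ) 1) : |ε * x| ≤ ε := by
    rw [abs_mul, abs_of_pos hε]
    exact mul_le_of_le_one_right hε.le (abs_le.2 hx)
  refine ⟨⟨g₀, hg₀, fun y hy => ?_⟩, ⟨max C 1, by positivity, fun ε hε hεε p hp => ?_⟩,
    ⟨g₀, hg₀, g₁, hg₁, fun ε hε hεε p hp => ?_⟩⟩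
  · simpa [hA y hy] using (hbd (y, 0) ⟨hy, by simp [hε₀]⟩).1
  · rw [hg ε p hp, hA p.1 hp.1]
    calc |f (B p.1 + (ε * p.2) • D p.1) - f (B p.1)|
        ≤ C * |ε * p.2| := hC p.1 hp.1 _ ((hscaled hε hp.2).trans hεε)
      _ ≤ max C 1 * ε :=
        mul_le_mul (le_max_left _ _) (hscaled hε hp.2) (abs_nonneg _) (by positivity)
  · rw [hg ε p hp]
    exact hbd (p.1, ε * p.2) ⟨hp.1, abs_le.1 ((hscaled hε hp.2).trans hεε)⟩

theorem ContDiffOn.crossProduct {E : Type*} [NormedAddCommGroup E] [NormedSpace ℝ E]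
    {s : Set E} {k : WithTop ℕ∞} {u v : E → Fin 3 → ℝ} (hu : ContDiffOn ℝ k u s)
    (hv : ContDiffOn ℝ k v s) : ContDiffOn ℝ k (fun y => u y ⨯₃ v y) s := by
  have hu' := contDiffOn_pi.1 hu
  have hv' := contDiffOn_pi.1 hv
  refine contDiffOn_pi.2 fun i => ?_
  fin_cases i <;> simp only [cross_apply] <;>
    exact ((hu' _).mul (hv' _)).sub ((hu' _).mul (hv' _))

theorem ContDiffOn.inv_sqrt_sum_sq_smul {ι E : Type*} [Fintype ι] [NormedAddCommGroup E]
    [NormedSpace ℝ E] {s : Set E} {k : WithTop ℕ∞} {c : E → ι → ℝ} (hc : ContDiffOn ℝ k c s)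
    (h0 : ∀ y ∈ s, c y ≠ 0) : ContDiffOn ℝ k (fun y => (√(∑ i, c y i ^ 2))⁻¹ • c y) s := by
  have hsum : ∀ y ∈ s, 0 < ∑ i, c y i ^ 2 := fun y hy => sum_sq_pos_of_ne_zero (h0 y hy)
  have hsq : ContDiffOn ℝ k (fun y => ∑ i, c y i ^ 2) s :=
    ContDiffOn.sum fun i _ => (contDiffOn_pi.1 hc i).pow 2
  exact ((hsq.sqrt fun y hy => (hsum y hy).ne').inv
    fun y hy => (Real.sqrt_pos.2 (hsum y hy)).ne').smul hc

theorem fderiv_add_smul_apply {E F : Type*} [NormedAddCommGroup E] [NormedSpace ℝ E]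
    [NormedAddCommGroup F] [NormedSpace ℝ F] {θ n : E → F} {y : E}
    (hθ : DifferentiableAt ℝ θ y) (hn : DifferentiableAt ℝ n y) (t : ℝ) (v : E) (s : ℝ) :
    fderiv ℝ (fun p : E × ℝ => θ p.1 + p.2 • n p.1) (y, t) (v, s) =
      fderiv ℝ θ y v + t • fderiv ℝ n y v + s • n y := by
  have hfst : HasFDerivAt (Prod.fst : E × ℝ → E) (ContinuousLinearMap.fst ℝ E ℝ) (y, t) :=
    hasFDerivAt_fst
  have h : HasFDerivAt (fun p : E × ℝ => θ p.1 + p.2 • n p.1) _ (y, t) :=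
    (hθ.hasFDerivAt.comp (y, t) hfst).add
      (hasFDerivAt_snd.smul (hn.hasFDerivAt.comp (y, t) hfst))
  rw [h.fderiv]
  simp only [_root_.add_apply, ContinuousLinearMap.comp_apply,
    ContinuousLinearMap.coe_fst', _root_.smul_apply,
    ContinuousLinearMap.smulRight_apply, ContinuousLinearMap.coe_snd']
  abel

def surfaceBasis {E : Type*} (a : Fin 2 → E → Fin 3 → ℝ) (n : E → Fin 3 → ℝ) (y : E) :
    Fin 3 → Fin 3 → ℝ :=
  ![a 0 y, a 1 y, n y]

noncomputable def normalDerivs (n : (Fin 2 → ℝ) → Fin 3 → ℝ) (y : Fin 2 → ℝ) :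
    Fin 3 → Fin 3 → ℝ :=
  ![fderiv ℝ n y (Pi.single 0 1), fderiv ℝ n y (Pi.single 1 1), 0]

theorem continuousOn_surfaceBasis {E : Type*} [TopologicalSpace E] {a : Fin 2 → E → Fin 3 → ℝ}
    {n : E → Fin 3 → ℝ} {s : Set E}
    (ha : ∀ α, ContinuousOn (a α) s) (hn : ContinuousOn n s) :
    ContinuousOn (surfaceBasis a n) s := by
  have := ha 0
  have := ha 1
  unfold surfaceBasis
  fun_prop

theorem ContDiffOn.continuousOn_normalDerivs {n : (Fin 2 → ℝ) → Fin 3 → ℝ} {s : Set (Fin 2 → ℝ)}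
    (hn : ContDiffOn ℝ 1 n s) (hs : IsOpen s) : ContinuousOn (normalDerivs n) s := by
  have hdn := hn.continuousOn_fderiv_of_isOpen hs le_rfl
  have := hdn.clm_apply (continuousOn_const (c := (Pi.single 0 1 : Fin 2 → ℝ)))
  have := hdn.clm_apply (continuousOn_const (c := (Pi.single 1 1 : Fin 2 → ℝ)))
  unfold normalDerivs
  fun_prop

theorem covariantBasis_eq_surfaceBasis_add_smul {θ n : (Fin 2 → ℝ) → Fin 3 → ℝ}
    {a : Fin 2 → (Fin 2 → ℝ) → Fin 3 → ℝ}
    (ha : ∀ α y, a α y = fderiv ℝ θ y (Pi.single α 1)) {g : Fin 3 → (Fin 2 → ℝ) × ℝ → Fin 3 → ℝ}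
    (hg0 : ∀ p, g 0 p = fderiv ℝ (fun p => θ p.1 + p.2 • n p.1) p (Pi.single 0 1, 0))
    (hg1 : ∀ p, g 1 p = fderiv ℝ (fun p => θ p.1 + p.2 • n p.1) p (Pi.single 1 1, 0))
    (hg2 : ∀ p, g 2 p = fderiv ℝ (fun p => θ p.1 + p.2 • n p.1) p (0, 1))
    {y : Fin 2 → ℝ} (hθ : DifferentiableAt ℝ θ y) (hn : DifferentiableAt ℝ n y) (t : ℝ) :
    (fun i => g i (y, t)) = surfaceBasis a n y + t • normalDerivs n y := by
  funext i
  fin_cases i <;>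
    simp [hg0, hg1, hg2, fderiv_add_smul_apply hθ hn, ha, surfaceBasis, normalDerivs]

theorem stmt12_general (ω : Set (Fin 2 → ℝ)) (hωb : Bornology.IsBounded ω)
    (U : Set (Fin 2 → ℝ)) (hUo : IsOpen U) (hωU : closure ω ⊆ U)
    (θ : (Fin 2 → ℝ) → Fin 3 → ℝ) (hθ : ContDiffOn ℝ 2 θ U)
    (a : Fin 2 → (Fin 2 → ℝ) → Fin 3 → ℝ)
    (ha : ∀ α y, a α y = fderiv ℝ θ y (Pi.single α 1))
    (hind : ∀ y ∈ closure ω, LinearIndependent ℝ ![a 0 y, a 1 y])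
    (c : (Fin 2 → ℝ) → Fin 3 → ℝ)
    (hc : ∀ y, c y = ![a 0 y 1 * a 1 y 2 - a 0 y 2 * a 1 y 1,
                       a 0 y 2 * a 1 y 0 - a 0 y 0 * a 1 y 2,
                       a 0 y 0 * a 1 y 1 - a 0 y 1 * a 1 y 0])
    (a3 : (Fin 2 → ℝ) → Fin 3 → ℝ)
    (ha3 : ∀ y, a3 y = (Real.sqrt (∑ i, c y i ^ 2))⁻¹ • c y)
    (Θ : (Fin 2 → ℝ) × ℝ → Fin 3 → ℝ)
    (hΘ : ∀ p, Θ p = θ p.1 + p.2 • a3 p.1)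
    (gvec : Fin 3 → ((Fin 2 → ℝ) × ℝ) → Fin 3 → ℝ)
    (hgvec0 : ∀ p, gvec 0 p = fderiv ℝ Θ p (Pi.single 0 1, 0))
    (hgvec1 : ∀ p, gvec 1 p = fderiv ℝ Θ p (Pi.single 1 1, 0))
    (hgvec2 : ∀ p, gvec 2 p = fderiv ℝ Θ p (0, 1))
    (ε₀ : ℝ) (hε₀ : 0 < ε₀)
    (hdet : ∀ p ∈ closure ω ×ˢ Icc (-ε₀) ε₀,
      0 < (Matrix.of fun i j => gvec j p i : Matrix (Fin 3) (Fin 3) ℝ).det)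
    (G : ((Fin 2 → ℝ) × ℝ) → Matrix (Fin 3) (Fin 3) ℝ)
    (hG : ∀ p i j, G p i j = ∑ m, gvec i p m * gvec j p m)
    (gdet : ℝ → ((Fin 2 → ℝ) × ℝ) → ℝ)
    (hgdet : ∀ ε p, gdet ε p = (G (p.1, ε * p.2)).det)
    (amat : (Fin 2 → ℝ) → Matrix (Fin 2) (Fin 2) ℝ)
    (hamat : ∀ y α β, amat y α β = ∑ m, a α y m * a β y m)
    (adet : (Fin 2 → ℝ) → ℝ) (hadet : ∀ y, adet y = (amat y).det) :
    (∃ a₀ > (0 : ℝ), ∀ y ∈ closure ω, a₀ ≤ adet y) ∧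
    (∃ C > (0 : ℝ), ∀ ε : ℝ, 0 < ε → ε ≤ ε₀ →
      ∀ p ∈ closure ω ×ˢ Icc (-1 : ℝ) 1, |gdet ε p - adet p.1| ≤ C * ε) ∧
    (∃ g₀ > (0 : ℝ), ∃ g₁ > (0 : ℝ), ∀ ε : ℝ, 0 < ε → ε ≤ ε₀ →
      ∀ p ∈ closure ω ×ˢ Icc (-1 : ℝ) 1, g₀ ≤ gdet ε p ∧ gdet ε p ≤ g₁) := by
  obtain rfl : Θ = fun p => θ p.1 + p.2 • a3 p.1 := funext hΘ
  obtain rfl : c = fun y => a 0 y ⨯₃ a 1 y := funext fun y => (hc y).trans (cross_apply _ _).symm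
  have haC (α) : ContDiffOn ℝ 1 (a α) U :=
    ((hθ.fderiv_of_isOpen hUo le_rfl).clm_apply contDiffOn_const).congr fun y _ => ha α y
  have hcC := (haC 0).crossProduct (haC 1)
  set V := U ∩ {y | a 0 y ⨯₃ a 1 y ≠ 0}
  have hVo : IsOpen V := hcC.continuousOn.isOpen_inter_preimage hUo isOpen_compl_singleton
  have hKV : closure ω ⊆ V := fun y hy =>
    ⟨hωU hy, crossProduct_ne_zero_iff_linearIndependent.2 (hind y hy)⟩
  have ha3C : ContDiffOn ℝ 1 a3 V :=
    ((hcC.mono inter_subset_left).inv_sqrt_sum_sq_smul fun y hy => hy.2).congr fun y _ => ha3 y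
  have hframe : ∀ y ∈ V, ∀ t,
      (fun i => gvec i (y, t)) = surfaceBasis a a3 y + t • normalDerivs a3 y := fun y hy =>
    covariantBasis_eq_surfaceBasis_add_smul ha hgvec0 hgvec1 hgvec2
      ((hθ.differentiableOn two_ne_zero).differentiableAt (hUo.mem_nhds hy.1))
      ((ha3C.differentiableOn one_ne_zero).differentiableAt (hVo.mem_nhds hy))
  refine exists_bounds_of_eq_add_smul (contDiff_det_of.pow 2) hωb.isCompact_closure
    ((continuousOn_surfaceBasis (fun α => (haC α).continuousOn.mono inter_subset_left)
      ha3C.continuousOn).mono hKV)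
    ((ha3C.continuousOn_normalDerivs hVo).mono hKV) hε₀.le ?_ ?_ ?_
  · rintro ⟨y, t⟩ hp
    rw [← hframe y (hKV hp.1), ← det_transpose]
    exact pow_pos (hdet _ hp) 2
  · intro ε p hp
    rw [hgdet, ← hframe p.1 (hKV hp.1), ← det_of_sum_mul_eq_sq]
    exact congrArg det (ext (hG _))
  · intro y _
    rw [hadet, show amat y = of fun α β => ∑ m, a α y m * a β y m from ext (hamat y),
      det_gram_fin_two_eq_det_sq, ← ha3]
    rfl

/-- Bounds for the scaled volume-element density `g(ε)` of a thin shell: positivity of the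
area element `a = det(a_{αβ})`, the estimate `g(ε) = a + O(ε)`, and uniform two-sided
positive bounds `0 < g₀ ≤ g(ε) ≤ g₁` on the fixed domain, for all `0 < ε ≤ ε₀`. -/
theorem stmt12 (ω : Set (Fin 2 → ℝ)) (hωo : IsOpen ω) (hωb : Bornology.IsBounded ω)
    (hωc : IsConnected ω)
    (U : Set (Fin 2 → ℝ)) (hUo : IsOpen U) (hωU : closure ω ⊆ U)
    (θ : (Fin 2 → ℝ) → Fin 3 → ℝ) (hθ : ContDiffOn ℝ 2 θ U) (hθinj : InjOn θ (closure ω))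
    (a : Fin 2 → (Fin 2 → ℝ) → Fin 3 → ℝ)
    (ha : ∀ α y, a α y = fderiv ℝ θ y (Pi.single α 1))
    (hind : ∀ y ∈ closure ω, LinearIndependent ℝ ![a 0 y, a 1 y])
    (c : (Fin 2 → ℝ) → Fin 3 → ℝ)
    (hc : ∀ y, c y = ![a 0 y 1 * a 1 y 2 - a 0 y 2 * a 1 y 1,
                       a 0 y 2 * a 1 y 0 - a 0 y 0 * a 1 y 2,
                       a 0 y 0 * a 1 y 1 - a 0 y 1 * a 1 y 0])
    (a3 : (Fin 2 → ℝ) → Fin 3 → ℝ)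
    (ha3 : ∀ y, a3 y = (Real.sqrt (∑ i, c y i ^ 2))⁻¹ • c y)
    (Θ : (Fin 2 → ℝ) × ℝ → Fin 3 → ℝ)
    (hΘ : ∀ p, Θ p = θ p.1 + p.2 • a3 p.1)
    (gvec : Fin 3 → ((Fin 2 → ℝ) × ℝ) → Fin 3 → ℝ)
    (hgvec0 : ∀ p, gvec 0 p = fderiv ℝ Θ p (Pi.single 0 1, 0))
    (hgvec1 : ∀ p, gvec 1 p = fderiv ℝ Θ p (Pi.single 1 1, 0))
    (hgvec2 : ∀ p, gvec 2 p = fderiv ℝ Θ p (0, 1))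
    (ε₀ : ℝ) (hε₀ : 0 < ε₀)
    (hΘinj : InjOn Θ (closure ω ×ˢ Icc (-ε₀) ε₀))
    (hΘC1 : ContDiffOn ℝ 1 Θ (closure ω ×ˢ Icc (-ε₀) ε₀))
    (hdet : ∀ p ∈ closure ω ×ˢ Icc (-ε₀) ε₀,
      0 < (Matrix.of fun i j => gvec j p i : Matrix (Fin 3) (Fin 3) ℝ).det)
    (G : ((Fin 2 → ℝ) × ℝ) → Matrix (Fin 3) (Fin 3) ℝ)
    (hG : ∀ p i j, G p i j = ∑ m, gvec i p m * gvec j p m)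
    (gdet : ℝ → ((Fin 2 → ℝ) × ℝ) → ℝ)
    (hgdet : ∀ ε p, gdet ε p = (G (p.1, ε * p.2)).det)
    (amat : (Fin 2 → ℝ) → Matrix (Fin 2) (Fin 2) ℝ)
    (hamat : ∀ y α β, amat y α β = ∑ m, a α y m * a β y m)
    (adet : (Fin 2 → ℝ) → ℝ) (hadet : ∀ y, adet y = (amat y).det) :
    (∃ a₀ > (0 : ℝ), ∀ y ∈ closure ω, a₀ ≤ adet y) ∧
    (∃ C > (0 : ℝ), ∀ ε : ℝ, 0 < ε → ε ≤ ε₀ →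
      ∀ p ∈ closure ω ×ˢ Icc (-1 : ℝ) 1, |gdet ε p - adet p.1| ≤ C * ε) ∧
    (∃ g₀ > (0 : ℝ), ∃ g₁ > (0 : ℝ), ∀ ε : ℝ, 0 < ε → ε ≤ ε₀ →
      ∀ p ∈ closure ω ×ˢ Icc (-1 : ℝ) 1, g₀ ≤ gdet ε p ∧ gdet ε p ≤ g₁) :=
  stmt12_general ω hωb U hUo hωU θ hθ a ha hind c hc a3 ha3 Θ hΘ gvec hgvec0 hgvec1 hgvec2 ε₀ hε₀
    hdet G hG gdet hgdet amat hamat adet hadet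
end

section
/- Let ω ⊂ ℝ² be a bounded domain and θ : closure(ω) → ℝ³ an injective C³ mapping with a_α := ∂_α θ linearly independent on closure(ω); let a₃ := (a₁ × a₂)/|a₁ × a₂|, Θ(y, x₃) := θ(y) + x₃ a₃(y), and let ε₀ > 0 be such that the vectors g_i := ∂_i Θ are linearly independent on closure(ω) × [−ε₀, ε₀]; let (g^i) be the corresponding contravariant basis (g^i · g_j = δ^i_j), and for 0 < ε ≤ ε₀ and x = (y, x₃) ∈ closure(ω) × [−1,1] define the scaled Christoffel symbols Γ^p_{ij}(ε)(x) := (g^p · ∂_i g_j)(y, εx₃). Let b_{αβ} := a₃ · ∂_β a_α and b^σ_α := a^{στ} b_{τα}, where (a^{στ}) is the inverse of (a_α · a_β). Then for all 0 < ε ≤ ε₀ and all (y, x₃) ∈ closure(ω) × [−1,1]: Γ³_{α3}(ε) = 0 and Γ^p_{33}(ε) = 0 for every p ∈ {1,2,3} and α ∈ {1,2}, and Γ³_{αβ}(ε)(y, x₃) = b_{αβ}(y) − ε x₃ Σ_{σ=1}^{2} b^σ_α(y) b_{σβ}(y) for all α, β ∈ {1,2}. -/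
/-!
Write `n = a₃` and `Θ(y, t) = θ y + t n(y)`. Then `g₃ = ∂₃Θ = n(y)` does not depend on `t`, so
`∂₃g₃ = 0`, and `∂_α g₃ = ∂_α n` is orthogonal to `n` because `|n| = 1`. Since `n` is orthogonal to
`g_α = a_α + t ∂_α n` and has unit length, it is the contravariant vector `g³`. Finally
`g³ · ∂_α g_β = n · ∂_α a_β + t n · ∂_α ∂_β n`: the first term is `b_{αβ}` by the symmetry of
second derivatives, and differentiating `n · ∂_β n = 0` turns the second into `-t ∂_α n · ∂_β n`,
which the Weingarten formula `∂_α n = -b^σ_α a_σ` evaluates to `-t b^σ_α b_{σβ}`.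
-/

open Set Filter Topology Matrix

section DotProduct

variable {ι m : Type*} [Fintype m]

theorem dotProduct_self_pos_of_ne_zero {v : m → ℝ} (h : v ≠ 0) : 0 < v ⬝ᵥ v :=
  (Finset.sum_nonneg fun i _ => mul_self_nonneg (v i)).lt_of_ne' (mt dotProduct_self_eq_zero.1 h)

theorem eq_zero_of_mem_span_of_dotProduct_eq_zero {s : Set (m → ℝ)} {w : m → ℝ}
    (hw : w ∈ Submodule.span ℝ s) (h : ∀ u ∈ s, w ⬝ᵥ u = 0) : w = 0 := by
  have hker : Submodule.span ℝ s ≤ LinearMap.ker (dotProductBilin ℝ ℝ w) :=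
    Submodule.span_le.2 h
  exact dotProduct_self_eq_zero.1 (hker hw)

theorem eq_of_forall_dotProduct_eq {s : Set (m → ℝ)} (hs : Submodule.span ℝ s = ⊤)
    {w w' : m → ℝ} (h : ∀ u ∈ s, w ⬝ᵥ u = w' ⬝ᵥ u) : w = w' :=
  sub_eq_zero.1 <| eq_zero_of_mem_span_of_dotProduct_eq_zero (hs ▸ Submodule.mem_top)
    fun u hu => by rw [sub_dotProduct, h u hu, sub_self]

theorem eq_of_forall_dotProduct_eq_of_linearIndependent [Fintype ι] {g : ι → m → ℝ}
    (hg : LinearIndependent ℝ g) (hcard : Fintype.card ι = Fintype.card m) {w w' : m → ℝ}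
    (h : ∀ j, w ⬝ᵥ g j = w' ⬝ᵥ g j) : w = w' :=
  eq_of_forall_dotProduct_eq (hg.span_eq_top_of_card_eq_finrank' (by simpa using hcard))
    (forall_mem_range.2 h)

theorem span_insert_eq_top_of_dotProduct_eq_zero {k : ℕ} {v : Fin k → Fin (k + 1) → ℝ}
    (hv : LinearIndependent ℝ v) {x : Fin (k + 1) → ℝ} (hx : x ≠ 0) (h : ∀ i, x ⬝ᵥ v i = 0) :
    Submodule.span ℝ (insert x (range v)) = ⊤ := by
  have hxv : x ∉ Submodule.span ℝ (range v) := fun hmem =>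
    hx (eq_zero_of_mem_span_of_dotProduct_eq_zero hmem (forall_mem_range.2 h))
  rw [← Fin.range_cons]
  exact (linearIndependent_finCons.2 ⟨hv, hxv⟩).span_eq_top_of_card_eq_finrank (by simp)

theorem eq_sum_inv_mulVec_smul [Fintype ι] [DecidableEq ι] {a : ι → m → ℝ} {x d : m → ℝ}
    {G : Matrix ι ι ℝ} (hG : ∀ σ τ, G σ τ = a σ ⬝ᵥ a τ) (hdet : IsUnit G.det)
    (hspan : Submodule.span ℝ (insert x (range a)) = ⊤) (hxa : ∀ σ, x ⬝ᵥ a σ = 0)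
    (hdx : d ⬝ᵥ x = 0) :
    d = ∑ σ, (G⁻¹ *ᵥ fun τ => d ⬝ᵥ a τ) σ • a σ := by
  have hGt : Gᵀ = G := Matrix.ext fun σ τ => by rw [transpose_apply, hG, hG, dotProduct_comm]
  refine eq_of_forall_dotProduct_eq hspan (forall_mem_insert.2 ⟨?_, forall_mem_range.2 ?_⟩)
  · rw [hdx, sum_dotProduct]
    exact (Finset.sum_eq_zero fun σ _ => by
      rw [smul_dotProduct, dotProduct_comm, hxa, smul_zero]).symm
  · intro τ
    calc d ⬝ᵥ a τ = ((G⁻¹ *ᵥ fun τ => d ⬝ᵥ a τ) ᵥ* G) τ := by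
          rw [← mulVec_transpose, hGt, mulVec_mulVec, mul_nonsing_inv _ hdet, one_mulVec]
      _ = _ := by
          rw [sum_dotProduct]
          simp only [smul_dotProduct, smul_eq_mul, ← hG]
          rfl

theorem dotProduct_apply_eq_zero_of_pi_single [Fintype ι] [DecidableEq ι]
    {L : (ι → ℝ) →L[ℝ] m → ℝ} {w : m → ℝ} (h : ∀ σ, w ⬝ᵥ L (Pi.single σ 1) = 0) (v : ι → ℝ) :
    w ⬝ᵥ L v = 0 := by
  rw [pi_eq_sum_univ' v, map_sum, dotProduct_sum]
  exact Finset.sum_eq_zero fun σ _ => by rw [map_smul, dotProduct_smul, h, smul_zero]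

end DotProduct

section Calculus

variable {E F : Type*} [NormedAddCommGroup E] [NormedSpace ℝ E]
  [NormedAddCommGroup F] [NormedSpace ℝ F] {m : Type*} [Fintype m]

theorem ContDiffAt.differentiableAt_fderiv_apply {f : E → F} {y : E} (hf : ContDiffAt ℝ 2 f y)
    (v : E) : DifferentiableAt ℝ (fun z => fderiv ℝ f z v) y :=
  ((hf.fderiv_right (m := 1) (by norm_num)).differentiableAt one_ne_zero).clm_apply
    (differentiableAt_const v)

theorem ContDiffAt.fderiv_fderiv_apply_comm {f : E → F} {y : E} (hf : ContDiffAt ℝ 2 f y)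
    (u v : E) :
    fderiv ℝ (fun z => fderiv ℝ f z u) y v = fderiv ℝ (fun z => fderiv ℝ f z v) y u := by
  have hdf : DifferentiableAt ℝ (fderiv ℝ f) y :=
    (hf.fderiv_right (m := 1) (by norm_num)).differentiableAt one_ne_zero
  rw [fderiv_clm_apply hdf (differentiableAt_const u),
    fderiv_clm_apply hdf (differentiableAt_const v)]
  simpa using hf.isSymmSndFDerivAt (by simp) v u

theorem fderiv_dotProduct_apply {f g : E → m → ℝ} {y : E} (hf : DifferentiableAt ℝ f y)
    (hg : DifferentiableAt ℝ g y) (u : E) :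
    fderiv ℝ (fun z => f z ⬝ᵥ g z) y u = fderiv ℝ f y u ⬝ᵥ g y + f y ⬝ᵥ fderiv ℝ g y u := by
  have hcoord : ∀ h : E → m → ℝ, DifferentiableAt ℝ h y → ∀ i,
      HasFDerivAt (fun z => h z i) ((ContinuousLinearMap.proj i).comp (fderiv ℝ h y)) y :=
    fun h hh i => hasFDerivAt_pi'.1 hh.hasFDerivAt i
  rw [show (fun z => f z ⬝ᵥ g z) = fun z => ∑ i, f z i * g z i from rfl,
    (HasFDerivAt.fun_sum (u := Finset.univ) fun i _ =>
    (hcoord f hf i).fun_mul (hcoord g hg i)).fderiv]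
  simp [dotProduct, Finset.sum_add_distrib, add_comm, mul_comm]

theorem fderiv_apply_dotProduct_eq_neg {f g : E → m → ℝ} {y : E} {k : ℝ}
    (hf : DifferentiableAt ℝ f y) (hg : DifferentiableAt ℝ g y)
    (h : ∀ᶠ z in 𝓝 y, f z ⬝ᵥ g z = k) (u : E) :
    fderiv ℝ f y u ⬝ᵥ g y = -(f y ⬝ᵥ fderiv ℝ g y u) := by
  have hconst : fderiv ℝ (fun z => f z ⬝ᵥ g z) y u = 0 := by
    rw [(show (fun z => f z ⬝ᵥ g z) =ᶠ[𝓝 y] fun _ => k from h).fderiv_eq]; simp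
  rw [fderiv_dotProduct_apply hf hg] at hconst
  linarith

theorem dotProduct_fderiv_self_eq_zero {n : E → m → ℝ} {y : E} (hn : DifferentiableAt ℝ n y)
    (hunit : ∀ᶠ z in 𝓝 y, n z ⬝ᵥ n z = 1) (u : E) : n y ⬝ᵥ fderiv ℝ n y u = 0 := by
  have := fderiv_apply_dotProduct_eq_neg hn hn hunit u
  rw [dotProduct_comm] at this
  linarith

theorem dotProduct_fderiv_fderiv_eq_neg {n : E → m → ℝ} {y : E} (hn : ContDiffAt ℝ 2 n y)
    (hunit : ∀ᶠ z in 𝓝 y, n z ⬝ᵥ n z = 1) (u v : E) :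
    n y ⬝ᵥ fderiv ℝ (fun z => fderiv ℝ n z v) y u = -(fderiv ℝ n y u ⬝ᵥ fderiv ℝ n y v) := by
  have horth : ∀ᶠ z in 𝓝 y, n z ⬝ᵥ fderiv ℝ n z v = 0 :=
    (hunit.eventually_nhds.and (hn.eventually (by simp))).mono fun z hz =>
      dotProduct_fderiv_self_eq_zero (hz.2.differentiableAt (by simp)) hz.1 v
  rw [fderiv_apply_dotProduct_eq_neg (hn.differentiableAt (by simp))
    (hn.differentiableAt_fderiv_apply v) horth u, neg_neg]

end Calculus

section Weingarten

variable {ι m : Type*} [Fintype ι] [DecidableEq ι] [Fintype m]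

structure IsNormalFrameAt {X : Type*} [TopologicalSpace X] (a : ι → X → m → ℝ) (n : X → m → ℝ)
    (G : Matrix ι ι ℝ) (y : X) : Prop where
  gram : ∀ σ τ, G σ τ = a σ y ⬝ᵥ a τ y
  isUnit_det : IsUnit G.det
  span_eq_top : Submodule.span ℝ (insert (n y) (range fun σ => a σ y)) = ⊤
  unit : ∀ᶠ z in 𝓝 y, n z ⬝ᵥ n z = 1
  orth : ∀ σ, ∀ᶠ z in 𝓝 y, n z ⬝ᵥ a σ z = 0

namespace IsNormalFrameAt

variable {E : Type*} [NormedAddCommGroup E] [NormedSpace ℝ E]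
  {a : ι → E → m → ℝ} {n : E → m → ℝ} {G : Matrix ι ι ℝ} {y : E}

/-- The Weingarten formula `∂_u n = -b^σ(u) a_σ`, where `b^σ(u) = G⁻¹ (n · ∂_u a_τ)`. -/
theorem fderiv_eq_neg_sum (h : IsNormalFrameAt a n G y) (hn : DifferentiableAt ℝ n y)
    (ha : ∀ σ, DifferentiableAt ℝ (a σ) y) (u : E) :
    fderiv ℝ n y u = -∑ σ, (G⁻¹ *ᵥ fun τ => n y ⬝ᵥ fderiv ℝ (a τ) y u) σ • a σ y := by
  have hcoord : (fun τ => fderiv ℝ n y u ⬝ᵥ a τ y) = -fun τ => n y ⬝ᵥ fderiv ℝ (a τ) y u :=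
    funext fun τ => fderiv_apply_dotProduct_eq_neg hn (ha τ) (h.orth τ) u
  refine (eq_sum_inv_mulVec_smul h.gram h.isUnit_det h.span_eq_top
    (fun σ => (h.orth σ).self_of_nhds)
    (by rw [dotProduct_comm]; exact dotProduct_fderiv_self_eq_zero hn h.unit u)).trans ?_
  rw [hcoord, mulVec_neg, ← Finset.sum_neg_distrib]
  simp only [Pi.neg_apply, neg_smul]

theorem fderiv_dotProduct_fderiv (h : IsNormalFrameAt a n G y) (hn : DifferentiableAt ℝ n y)
    (ha : ∀ σ, DifferentiableAt ℝ (a σ) y) (u v : E) :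
    fderiv ℝ n y u ⬝ᵥ fderiv ℝ n y v = ∑ σ,
      (G⁻¹ *ᵥ fun τ => n y ⬝ᵥ fderiv ℝ (a τ) y u) σ * (n y ⬝ᵥ fderiv ℝ (a σ) y v) := by
  rw [h.fderiv_eq_neg_sum hn ha u, neg_dotProduct, sum_dotProduct, ← Finset.sum_neg_distrib]
  refine Finset.sum_congr rfl fun σ _ => ?_
  rw [smul_dotProduct, dotProduct_comm, fderiv_apply_dotProduct_eq_neg hn (ha σ) (h.orth σ) v,
    smul_eq_mul, mul_neg, neg_neg]

end IsNormalFrameAt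

end Weingarten

section Shell

variable {E F : Type*} [NormedAddCommGroup E] [NormedSpace ℝ E]
  [NormedAddCommGroup F] [NormedSpace ℝ F]

theorem fderiv_add_snd_smul_apply {f h : E → F} {p : E × ℝ} (hf : DifferentiableAt ℝ f p.1)
    (hh : DifferentiableAt ℝ h p.1) (v : E) (s : ℝ) :
    fderiv ℝ (fun q : E × ℝ => f q.1 + q.2 • h q.1) p (v, s)
      = fderiv ℝ f p.1 v + p.2 • fderiv ℝ h p.1 v + s • h p.1 := by
  have hderiv : HasFDerivAt (fun q : E × ℝ => f q.1 + q.2 • h q.1) _ p :=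
    (hf.hasFDerivAt.comp p hasFDerivAt_fst).add
      (hasFDerivAt_snd.smul (hh.hasFDerivAt.comp p hasFDerivAt_fst))
  rw [hderiv.fderiv]
  simp [add_assoc]

variable {θ n : E → F} {Θ : E × ℝ → F}

theorem fderiv_shell_apply (hΘ : ∀ p, Θ p = θ p.1 + p.2 • n p.1) {p : E × ℝ}
    (hθ : DifferentiableAt ℝ θ p.1) (hn : DifferentiableAt ℝ n p.1) (v : E) (s : ℝ) :
    fderiv ℝ Θ p (v, s) = fderiv ℝ θ p.1 v + s • n p.1 + p.2 • fderiv ℝ n p.1 v := by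
  rw [funext hΘ, fderiv_add_snd_smul_apply hθ hn]
  abel

theorem dotProduct_fderiv_shell_apply {m : Type*} [Fintype m] {θ n : E → m → ℝ}
    {Θ : E × ℝ → m → ℝ} (hΘ : ∀ p, Θ p = θ p.1 + p.2 • n p.1) {y : E} (t : ℝ)
    (hθ : DifferentiableAt ℝ θ y) (hn : DifferentiableAt ℝ n y)
    (hunit : ∀ᶠ z in 𝓝 y, n z ⬝ᵥ n z = 1) (horth : ∀ v, n y ⬝ᵥ fderiv ℝ θ y v = 0) (v : E)
    (s : ℝ) :
    n y ⬝ᵥ fderiv ℝ Θ (y, t) (v, s) = s := by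
  rw [fderiv_shell_apply hΘ (p := (y, t)) hθ hn]
  simp [dotProduct_add, horth, hunit.self_of_nhds, dotProduct_fderiv_self_eq_zero hn hunit v]

theorem fderiv_fderiv_shell_apply (hΘ : ∀ p, Θ p = θ p.1 + p.2 • n p.1) {y : E} (t : ℝ)
    (hθ : ContDiffAt ℝ 2 θ y) (hn : ContDiffAt ℝ 2 n y) (v w : E) (s r : ℝ) :
    fderiv ℝ (fun p => fderiv ℝ Θ p (v, s)) (y, t) (w, r)
      = fderiv ℝ (fun z => fderiv ℝ θ z v) y w + s • fderiv ℝ n y w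
        + t • fderiv ℝ (fun z => fderiv ℝ n z v) y w + r • fderiv ℝ n y v := by
  have hdiff : ∀ᶠ z in 𝓝 y, DifferentiableAt ℝ θ z ∧ DifferentiableAt ℝ n z :=
    ((hθ.eventually (by simp)).and (hn.eventually (by simp))).mono fun z hz =>
      ⟨hz.1.differentiableAt (by simp), hz.2.differentiableAt (by simp)⟩
  have hloc : (fun p => fderiv ℝ Θ p (v, s)) =ᶠ[𝓝 (y, t)]
      fun p => (fderiv ℝ θ p.1 v + s • n p.1) + p.2 • fderiv ℝ n p.1 v :=
    (continuousAt_fst.eventually hdiff).mono fun p hp => fderiv_shell_apply hΘ hp.1 hp.2 v s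
  have hθv := hθ.differentiableAt_fderiv_apply v
  have hn1 : DifferentiableAt ℝ n y := hn.differentiableAt (by simp)
  rw [hloc.fderiv_eq, fderiv_add_snd_smul_apply (p := (y, t))
    (f := fun z => fderiv ℝ θ z v + s • n z) (h := fun z => fderiv ℝ n z v)
    (hθv.add (hn1.const_smul s)) (hn.differentiableAt_fderiv_apply v)]
  dsimp only
  rw [fderiv_fun_add (g := fun z => s • n z) hθv (hn1.const_smul s), fderiv_fun_const_smul hn1]
  simp

theorem fderiv_fderiv_shell_apply_zero_one (hΘ : ∀ p, Θ p = θ p.1 + p.2 • n p.1) {y : E} (t : ℝ)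
    (hθ : ContDiffAt ℝ 2 θ y) (hn : ContDiffAt ℝ 2 n y) (w : E) (r : ℝ) :
    fderiv ℝ (fun p => fderiv ℝ Θ p (0, 1)) (y, t) (w, r) = fderiv ℝ n y w := by
  rw [fderiv_fderiv_shell_apply hΘ t hθ hn]
  simp

theorem dotProduct_fderiv_fderiv_shell_apply {m : Type*} [Fintype m] {θ n : E → m → ℝ}
    {Θ : E × ℝ → m → ℝ} (hΘ : ∀ p, Θ p = θ p.1 + p.2 • n p.1) {y : E} (t : ℝ)
    (hθ : ContDiffAt ℝ 2 θ y) (hn : ContDiffAt ℝ 2 n y) (hunit : ∀ᶠ z in 𝓝 y, n z ⬝ᵥ n z = 1)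
    (u v : E) :
    n y ⬝ᵥ fderiv ℝ (fun p => fderiv ℝ Θ p (v, 0)) (y, t) (u, 0)
      = n y ⬝ᵥ fderiv ℝ (fun z => fderiv ℝ θ z v) y u - t * (fderiv ℝ n y u ⬝ᵥ fderiv ℝ n y v) := by
  rw [fderiv_fderiv_shell_apply hΘ t hθ hn]
  simp only [zero_smul, add_zero, dotProduct_add, dotProduct_smul, smul_eq_mul,
    dotProduct_fderiv_fderiv_eq_neg hn hunit]
  ring

end Shell

section UnitNormal

/-- The paper's `a₃ = (a₁ × a₂) / |a₁ × a₂|` for the tangent vectors `a₁ = w 0`, `a₂ = w 1`. -/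
noncomputable def unitNormal (w : Fin 2 → Fin 3 → ℝ) : Fin 3 → ℝ :=
  (√((w 0 ⨯₃ w 1) ⬝ᵥ (w 0 ⨯₃ w 1)))⁻¹ • (w 0 ⨯₃ w 1)

theorem unitNormal_dotProduct (w : Fin 2 → Fin 3 → ℝ) (i : Fin 2) : unitNormal w ⬝ᵥ w i = 0 := by
  rw [unitNormal, smul_dotProduct, dotProduct_comm _ (w i)]
  fin_cases i <;> simp [dot_self_cross, dot_cross_self]

theorem unitNormal_dotProduct_self {w : Fin 2 → Fin 3 → ℝ} (h : w 0 ⨯₃ w 1 ≠ 0) :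
    unitNormal w ⬝ᵥ unitNormal w = 1 := by
  have hpos := dotProduct_self_pos_of_ne_zero h
  rw [unitNormal, smul_dotProduct, dotProduct_smul, smul_eq_mul, smul_eq_mul, ← mul_assoc,
    ← mul_inv, Real.mul_self_sqrt hpos.le, inv_mul_cancel₀ hpos.ne']

theorem cross_ne_zero_of_linearIndependent {w : Fin 2 → Fin 3 → ℝ} (h : LinearIndependent ℝ w) :
    w 0 ⨯₃ w 1 ≠ 0 :=
  crossProduct_ne_zero_iff_linearIndependent.2 (by rwa [← FinVec.etaExpand_eq w] at h)

theorem span_insert_unitNormal_eq_top {w : Fin 2 → Fin 3 → ℝ} (h : LinearIndependent ℝ w) :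
    Submodule.span ℝ (insert (unitNormal w) (range w)) = ⊤ := by
  refine span_insert_eq_top_of_dotProduct_eq_zero h (fun h0 => ?_) (unitNormal_dotProduct w)
  simpa [h0] using unitNormal_dotProduct_self (cross_ne_zero_of_linearIndependent h)

theorem isUnit_det_gram_of_linearIndependent {w : Fin 2 → Fin 3 → ℝ} (h : LinearIndependent ℝ w)
    {G : Matrix (Fin 2) (Fin 2) ℝ} (hG : ∀ σ τ, G σ τ = w σ ⬝ᵥ w τ) : IsUnit G.det := by
  rw [isUnit_iff_ne_zero, det_fin_two, hG, hG, hG, hG, ← cross_dot_cross]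
  exact (dotProduct_self_pos_of_ne_zero (cross_ne_zero_of_linearIndependent h)).ne'

theorem ContinuousAt.crossProduct {X : Type*} [TopologicalSpace X] {f g : X → Fin 3 → ℝ} {y : X}
    (hf : ContinuousAt f y) (hg : ContinuousAt g y) : ContinuousAt (fun z => f z ⨯₃ g z) y := by
  have hf' := continuousAt_pi.1 hf
  have hg' := continuousAt_pi.1 hg
  refine continuousAt_pi.2 fun i => ?_
  fin_cases i <;> exact ((hf' _).mul (hg' _)).sub ((hf' _).mul (hg' _))

theorem isNormalFrameAt_unitNormal {X : Type*} [TopologicalSpace X] {a : Fin 2 → X → Fin 3 → ℝ}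
    {y : X}
    (ha : ∀ σ, ContinuousAt (a σ) y) (hli : LinearIndependent ℝ fun σ => a σ y)
    {G : Matrix (Fin 2) (Fin 2) ℝ} (hG : ∀ σ τ, G σ τ = a σ y ⬝ᵥ a τ y) :
    IsNormalFrameAt a (fun z => unitNormal fun σ => a σ z) G y where
  gram := hG
  isUnit_det := isUnit_det_gram_of_linearIndependent hli hG
  span_eq_top := span_insert_unitNormal_eq_top hli
  unit := ((ha 0).crossProduct (ha 1)).eventually_ne (cross_ne_zero_of_linearIndependent hli)
    |>.mono fun _ hz => unitNormal_dotProduct_self hz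
  orth σ := .of_forall fun _ => unitNormal_dotProduct _ σ

variable {E : Type*} [NormedAddCommGroup E] [NormedSpace ℝ E] {k : WithTop ℕ∞}

theorem ContDiffAt.crossProduct {f g : E → Fin 3 → ℝ} {y : E} (hf : ContDiffAt ℝ k f y)
    (hg : ContDiffAt ℝ k g y) : ContDiffAt ℝ k (fun z => f z ⨯₃ g z) y := by
  have hf' := contDiffAt_pi.1 hf
  have hg' := contDiffAt_pi.1 hg
  refine contDiffAt_pi.2 fun i => ?_
  fin_cases i <;> exact ((hf' _).mul (hg' _)).sub ((hf' _).mul (hg' _))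

theorem ContDiffAt.unitNormal {a : Fin 2 → E → Fin 3 → ℝ} {y : E}
    (ha : ∀ σ, ContDiffAt ℝ k (a σ) y) (h : a 0 y ⨯₃ a 1 y ≠ 0) :
    ContDiffAt ℝ k (fun z => unitNormal fun σ => a σ z) y := by
  have hc := (ha 0).crossProduct (ha 1)
  have hcc : ContDiffAt ℝ k (fun z => (a 0 z ⨯₃ a 1 z) ⬝ᵥ (a 0 z ⨯₃ a 1 z)) y :=
    ContDiffAt.sum fun i _ => (contDiffAt_pi.1 hc i).mul (contDiffAt_pi.1 hc i)
  have hpos := dotProduct_self_pos_of_ne_zero h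
  exact ((hcc.sqrt hpos.ne').inv (Real.sqrt_pos.2 hpos).ne').smul hc

end UnitNormal

theorem stmt16_general (ω : Set (Fin 2 → ℝ))
    (U : Set (Fin 2 → ℝ)) (hUo : IsOpen U) (hωU : closure ω ⊆ U)
    (θ : (Fin 2 → ℝ) → Fin 3 → ℝ) (hθ : ContDiffOn ℝ 3 θ U)
    (a : Fin 2 → (Fin 2 → ℝ) → Fin 3 → ℝ)
    (ha : ∀ α y, a α y = fderiv ℝ θ y (Pi.single α 1))
    (hind : ∀ y ∈ closure ω, LinearIndependent ℝ ![a 0 y, a 1 y])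
    (c : (Fin 2 → ℝ) → Fin 3 → ℝ)
    (hc : ∀ y, c y = ![a 0 y 1 * a 1 y 2 - a 0 y 2 * a 1 y 1,
                       a 0 y 2 * a 1 y 0 - a 0 y 0 * a 1 y 2,
                       a 0 y 0 * a 1 y 1 - a 0 y 1 * a 1 y 0])
    (a3 : (Fin 2 → ℝ) → Fin 3 → ℝ)
    (ha3 : ∀ y, a3 y = (Real.sqrt (∑ i, c y i ^ 2))⁻¹ • c y)
    (Θ : (Fin 2 → ℝ) × ℝ → Fin 3 → ℝ)
    (hΘ : ∀ p, Θ p = θ p.1 + p.2 • a3 p.1)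
    (gvec : Fin 3 → ((Fin 2 → ℝ) × ℝ) → Fin 3 → ℝ)
    (hgvec0 : ∀ p, gvec 0 p = fderiv ℝ Θ p (Pi.single 0 1, 0))
    (hgvec1 : ∀ p, gvec 1 p = fderiv ℝ Θ p (Pi.single 1 1, 0))
    (hgvec2 : ∀ p, gvec 2 p = fderiv ℝ Θ p (0, 1))
    (ε₀ : ℝ)
    (hgind : ∀ p ∈ closure ω ×ˢ Icc (-ε₀) ε₀,
      LinearIndependent ℝ ![gvec 0 p, gvec 1 p, gvec 2 p])
    (gcon : Fin 3 → ((Fin 2 → ℝ) × ℝ) → Fin 3 → ℝ)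
    (hgcon : ∀ p ∈ closure ω ×ˢ Icc (-ε₀) ε₀, ∀ i j : Fin 3,
      (∑ m, gcon i p m * gvec j p m) = if i = j then (1 : ℝ) else 0)
    (dgvec : Fin 3 → Fin 3 → ((Fin 2 → ℝ) × ℝ) → Fin 3 → ℝ)
    (hdgvec : ∀ (j : Fin 3) q, dgvec 0 j q = fderiv ℝ (gvec j) q (Pi.single 0 1, 0) ∧
      dgvec 1 j q = fderiv ℝ (gvec j) q (Pi.single 1 1, 0) ∧
      dgvec 2 j q = fderiv ℝ (gvec j) q (0, 1))
    (Gam : ℝ → ((Fin 2 → ℝ) × ℝ) → Fin 3 → Fin 3 → Fin 3 → ℝ)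
    (hGam : ∀ ε x q i j, Gam ε x q i j =
      ∑ m, gcon q (x.1, ε * x.2) m * dgvec i j (x.1, ε * x.2) m)
    (amat : (Fin 2 → ℝ) → Matrix (Fin 2) (Fin 2) ℝ)
    (hamat : ∀ y α β, amat y α β = ∑ m, a α y m * a β y m)
    (bcov : (Fin 2 → ℝ) → Fin 2 → Fin 2 → ℝ)
    (hbcov : ∀ y α β, bcov y α β = ∑ m, a3 y m * fderiv ℝ (a α) y (Pi.single β 1) m)
    (bmix : (Fin 2 → ℝ) → Fin 2 → Fin 2 → ℝ)
    (hbmix : ∀ y σ α, bmix y σ α = ∑ τ, (amat y)⁻¹ σ τ * bcov y τ α) :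
    ∀ ε : ℝ, 0 < ε → ε ≤ ε₀ → ∀ x ∈ closure ω ×ˢ Icc (-1 : ℝ) 1,
      (∀ α : Fin 2, Gam ε x 2 α.castSucc 2 = 0) ∧
      (∀ q : Fin 3, Gam ε x q 2 2 = 0) ∧
      (∀ α β : Fin 2, Gam ε x 2 α.castSucc β.castSucc
        = bcov x.1 α β - ε * x.2 * ∑ σ, bmix x.1 σ α * bcov x.1 σ β) := by
  rintro ε hε hεε₀ ⟨y, s⟩ ⟨hy, hs⟩
  have hq : (y, ε * s) ∈ closure ω ×ˢ Icc (-ε₀) ε₀ :=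
    ⟨hy, by nlinarith [hs.1, hs.2], by nlinarith [hs.1, hs.2]⟩
  have hθy : ContDiffAt ℝ 3 θ y := hθ.contDiffAt (hUo.mem_nhds (hωU hy))
  have hθ2 : ContDiffAt ℝ 2 θ y := hθy.of_le (by norm_num)
  have ha2 : ∀ σ, ContDiffAt ℝ 2 (a σ) y := fun σ => funext (ha σ) ▸
    (hθy.fderiv_right (m := 2) (by norm_num)).clm_apply contDiffAt_const
  have hli : LinearIndependent ℝ fun σ => a σ y := FinVec.etaExpand_eq (fun σ => a σ y) ▸ hind y hy
  obtain rfl : a3 = fun z => unitNormal fun σ => a σ z := funext fun z => by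
    rw [ha3, hc]; simp [unitNormal, cross_apply, dotProduct, sq]
  have hframe := isNormalFrameAt_unitNormal (fun σ => (ha2 σ).continuousAt) hli (hamat y)
  have hn : ContDiffAt ℝ 2 (fun z => unitNormal fun σ => a σ z) y :=
    .unitNormal ha2 (cross_ne_zero_of_linearIndependent hli)
  have hnd : DifferentiableAt ℝ (fun z => unitNormal fun σ => a σ z) y :=
    hn.differentiableAt (by norm_num)
  have hgv : ∀ α : Fin 2, gvec α.castSucc = fun p => fderiv ℝ Θ p (Pi.single α 1, 0) :=
    Fin.forall_fin_two.2 ⟨funext hgvec0, funext hgvec1⟩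
  have hdg : ∀ (α : Fin 2) j, dgvec α.castSucc j (y, ε * s)
      = fderiv ℝ (gvec j) (y, ε * s) (Pi.single α 1, 0) :=
    Fin.forall_fin_two.2 ⟨fun j => (hdgvec j _).1, fun j => (hdgvec j _).2.1⟩
  have hGam' : ∀ q i j, Gam ε (y, s) q i j = gcon q (y, ε * s) ⬝ᵥ dgvec i j (y, ε * s) :=
    fun q i j => hGam ε (y, s) q i j
  have hgcon2 : gcon 2 (y, ε * s) = unitNormal fun σ => a σ y := by
    have hΘn := dotProduct_fderiv_shell_apply hΘ (ε * s) (hθ2.differentiableAt (by norm_num))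
      hnd hframe.unit <| dotProduct_apply_eq_zero_of_pi_single fun α =>
        ha α y ▸ (hframe.orth α).self_of_nhds
    refine eq_of_forall_dotProduct_eq_of_linearIndependent (g := fun j => gvec j (y, ε * s))
      (FinVec.etaExpand_eq (fun j => gvec j (y, ε * s)) ▸ hgind _ hq) rfl fun j => ?_
    rw [show gcon 2 _ ⬝ᵥ _ = _ from hgcon _ hq 2 j]
    fin_cases j <;> simp [hgvec0, hgvec1, hgvec2, hΘn]
  refine ⟨fun α => ?_, fun p => ?_, fun α β => ?_⟩
  · rw [hGam', hgcon2, hdg, funext hgvec2, fderiv_fderiv_shell_apply_zero_one hΘ _ hθ2 hn]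
    exact dotProduct_fderiv_self_eq_zero hnd hframe.unit _
  · rw [hGam', (hdgvec 2 _).2.2, funext hgvec2, fderiv_fderiv_shell_apply_zero_one hΘ _ hθ2 hn,
      map_zero, dotProduct_zero]
  · rw [hGam', hgcon2, hdg, hgv, dotProduct_fderiv_fderiv_shell_apply hΘ _ hθ2 hn hframe.unit,
      hframe.fderiv_dotProduct_fderiv hnd fun σ => (ha2 σ).differentiableAt (by norm_num),
      hθ2.fderiv_fderiv_apply_comm, ← funext (ha α)]
    simp only [dotProduct, mulVec, ← hbcov, ← hbmix]

/-- Exact identities for the scaled three-dimensional Christoffel symbols of a shell: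
`Γ³_{α3}(ε) = 0`, `Γ^p_{33}(ε) = 0`, and
`Γ³_{αβ}(ε)(y,x₃) = b_{αβ}(y) − ε x₃ b^σ_α(y) b_{σβ}(y)`. -/
theorem stmt16 (ω : Set (Fin 2 → ℝ)) (hωo : IsOpen ω) (hωb : Bornology.IsBounded ω)
    (hωc : IsConnected ω)
    (U : Set (Fin 2 → ℝ)) (hUo : IsOpen U) (hωU : closure ω ⊆ U)
    (θ : (Fin 2 → ℝ) → Fin 3 → ℝ) (hθ : ContDiffOn ℝ 3 θ U) (hθinj : InjOn θ (closure ω))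
    (a : Fin 2 → (Fin 2 → ℝ) → Fin 3 → ℝ)
    (ha : ∀ α y, a α y = fderiv ℝ θ y (Pi.single α 1))
    (hind : ∀ y ∈ closure ω, LinearIndependent ℝ ![a 0 y, a 1 y])
    (c : (Fin 2 → ℝ) → Fin 3 → ℝ)
    (hc : ∀ y, c y = ![a 0 y 1 * a 1 y 2 - a 0 y 2 * a 1 y 1,
                       a 0 y 2 * a 1 y 0 - a 0 y 0 * a 1 y 2,
                       a 0 y 0 * a 1 y 1 - a 0 y 1 * a 1 y 0])
    (a3 : (Fin 2 → ℝ) → Fin 3 → ℝ)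
    (ha3 : ∀ y, a3 y = (Real.sqrt (∑ i, c y i ^ 2))⁻¹ • c y)
    (Θ : (Fin 2 → ℝ) × ℝ → Fin 3 → ℝ)
    (hΘ : ∀ p, Θ p = θ p.1 + p.2 • a3 p.1)
    (gvec : Fin 3 → ((Fin 2 → ℝ) × ℝ) → Fin 3 → ℝ)
    (hgvec0 : ∀ p, gvec 0 p = fderiv ℝ Θ p (Pi.single 0 1, 0))
    (hgvec1 : ∀ p, gvec 1 p = fderiv ℝ Θ p (Pi.single 1 1, 0))
    (hgvec2 : ∀ p, gvec 2 p = fderiv ℝ Θ p (0, 1))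
    (ε₀ : ℝ) (hε₀ : 0 < ε₀)
    (hgind : ∀ p ∈ closure ω ×ˢ Icc (-ε₀) ε₀,
      LinearIndependent ℝ ![gvec 0 p, gvec 1 p, gvec 2 p])
    (gcon : Fin 3 → ((Fin 2 → ℝ) × ℝ) → Fin 3 → ℝ)
    (hgcon : ∀ p ∈ closure ω ×ˢ Icc (-ε₀) ε₀, ∀ i j : Fin 3,
      (∑ m, gcon i p m * gvec j p m) = if i = j then (1 : ℝ) else 0)
    (dgvec : Fin 3 → Fin 3 → ((Fin 2 → ℝ) × ℝ) → Fin 3 → ℝ)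
    (hdgvec : ∀ (j : Fin 3) q, dgvec 0 j q = fderiv ℝ (gvec j) q (Pi.single 0 1, 0) ∧
      dgvec 1 j q = fderiv ℝ (gvec j) q (Pi.single 1 1, 0) ∧
      dgvec 2 j q = fderiv ℝ (gvec j) q (0, 1))
    (Gam : ℝ → ((Fin 2 → ℝ) × ℝ) → Fin 3 → Fin 3 → Fin 3 → ℝ)
    (hGam : ∀ ε x q i j, Gam ε x q i j =
      ∑ m, gcon q (x.1, ε * x.2) m * dgvec i j (x.1, ε * x.2) m)
    (amat : (Fin 2 → ℝ) → Matrix (Fin 2) (Fin 2) ℝ)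
    (hamat : ∀ y α β, amat y α β = ∑ m, a α y m * a β y m)
    (bcov : (Fin 2 → ℝ) → Fin 2 → Fin 2 → ℝ)
    (hbcov : ∀ y α β, bcov y α β = ∑ m, a3 y m * fderiv ℝ (a α) y (Pi.single β 1) m)
    (bmix : (Fin 2 → ℝ) → Fin 2 → Fin 2 → ℝ)
    (hbmix : ∀ y σ α, bmix y σ α = ∑ τ, (amat y)⁻¹ σ τ * bcov y τ α) :
    ∀ ε : ℝ, 0 < ε → ε ≤ ε₀ → ∀ x ∈ closure ω ×ˢ Icc (-1 : ℝ) 1,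
      (∀ α : Fin 2, Gam ε x 2 α.castSucc 2 = 0) ∧
      (∀ q : Fin 3, Gam ε x q 2 2 = 0) ∧
      (∀ α β : Fin 2, Gam ε x 2 α.castSucc β.castSucc
        = bcov x.1 α β - ε * x.2 * ∑ σ, bmix x.1 σ α * bcov x.1 σ β) :=
  stmt16_general ω U hUo hωU θ hθ a ha hind c hc a3 ha3 Θ hΘ gvec hgvec0 hgvec1 hgvec2 ε₀ hgind gcon
    hgcon dgvec hdgvec Gam hGam amat hamat bcov hbcov bmix hbmix
end
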